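/- arXiv:1704.00191 — 2 statements merged into one kernel-verified Lean document; each statement's English description precedes it below -/
import Mathlib

section
/- Suppose M_R is (σ,δ)-skew Armendariz and satisfies the condition (C_σ): for m ∈ M and a ∈ R, mσ(a) = 0 implies ma = 0. If m(x) = Σ_{i=0}^p m_i x^i ∈ M[x;σ,δ] and f(x) = Σ_{j=0}^q a_j x^j ∈ R[x;σ,δ] satisfy m(x)f(x) = 0, then m_i a_j = 0 for all i, j. -/
open MulOpposite

/-- `fw σ δ i j` is `f_i^j`, the sum of all words in `σ`, `δ` built with `i` factors of `σ`
and `j - i` factors of `δ`. -/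
def fw {R : Type*} [Ring R] (σ δ : R → R) : ℕ → ℕ → R → R
  | 0, 0 => id
  | _ + 1, 0 => fun _ => 0
  | 0, j + 1 => fun a => δ (fw σ δ 0 j a)
  | i + 1, j + 1 => fun a => σ (fw σ δ i j a) + δ (fw σ δ (i + 1) j a)

/-- Multiplication of the Ore extension `R[x;σ,δ]`, on coefficient sequences. -/
noncomputable def skewMul {R : Type*} [Ring R] (σ δ : R → R) (p q : ℕ →₀ R) : ℕ →₀ R :=
  p.sum fun j a => q.sum fun l b =>
    ∑ i ∈ Finset.range (j + 1), Finsupp.single (i + l) (a * fw σ δ i j b)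

/-- The action of `R[x;σ,δ]` on the skew polynomial module `M[x;σ,δ]`, where `M` is a
right `R`-module (a module over `Rᵐᵒᵖ`): `(m x^j)·(b x^l) = Σ_{i≤j} (m·f_i^j(b)) x^{i+l}`. -/
noncomputable def skewSMul {R : Type*} [Ring R] (σ δ : R → R) {M : Type*} [AddCommGroup M]
    [Module Rᵐᵒᵖ M] (m : ℕ →₀ M) (q : ℕ →₀ R) : ℕ →₀ M :=
  m.sum fun j mm => q.sum fun l b =>
    ∑ i ∈ Finset.range (j + 1), Finsupp.single (i + l) (op (fw σ δ i j b) • mm)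

/-- A right `R`-module `M` is `(σ,δ)`-skew McCoy if whenever `m(x) g(x) = 0` in `M[x;σ,δ]`
with `g(x) ≠ 0`, there is a nonzero `a ∈ R` with `m(x) a = 0`. -/
def IsSkewMcCoy {R : Type*} [Ring R] (σ δ : R → R) (M : Type*) [AddCommGroup M]
    [Module Rᵐᵒᵖ M] : Prop :=
  ∀ (m : ℕ →₀ M) (g : ℕ →₀ R), g ≠ 0 → skewSMul σ δ m g = 0 →
    ∃ a : R, a ≠ 0 ∧ skewSMul σ δ m (Finsupp.single 0 a) = 0

/-- A right `R`-module `M` is `(σ,δ)`-skew Armendariz if `m(x) g(x) = 0` implies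
`(m_i x^i)(b_j x^j) = 0` for all `i, j`. -/
def IsSkewArmendariz {R : Type*} [Ring R] (σ δ : R → R) (M : Type*) [AddCommGroup M]
    [Module Rᵐᵒᵖ M] : Prop :=
  ∀ (m : ℕ →₀ M) (g : ℕ →₀ R), skewSMul σ δ m g = 0 →
    ∀ i j, skewSMul σ δ (Finsupp.single i (m i)) (Finsupp.single j (g j)) = 0

/-- `σ`-compatibility of a right module: `m a = 0 ↔ m σ(a) = 0`. -/
def SigmaCompatible {R : Type*} [Ring R] (σ : R → R) (M : Type*) [AddCommGroup M]
    [Module Rᵐᵒᵖ M] : Prop :=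
  ∀ (m : M) (a : R), op a • m = 0 ↔ op (σ a) • m = 0

/-- `δ`-compatibility of a right module: `m a = 0 → m δ(a) = 0`. -/
def DeltaCompatible {R : Type*} [Ring R] (δ : R → R) (M : Type*) [AddCommGroup M]
    [Module Rᵐᵒᵖ M] : Prop :=
  ∀ (m : M) (a : R), op a • m = 0 → op (δ a) • m = 0

/-- A right module `M` is reduced if `m a = 0` implies `mR ∩ Ma = 0`. -/
def IsReducedModule {R : Type*} [Ring R] (M : Type*) [AddCommGroup M]
    [Module Rᵐᵒᵖ M] : Prop :=
  ∀ (m : M) (a : R), op a • m = 0 →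
    ∀ x : M, (∃ r : R, op r • m = x) → (∃ m' : M, op a • m' = x) → x = 0

/-- Condition `(*)`: `m(x) f(x) = 0` implies `m(x) R f(x) = 0`. -/
def StarCondition {R : Type*} [Ring R] (σ δ : R → R) (M : Type*) [AddCommGroup M]
    [Module Rᵐᵒᵖ M] : Prop :=
  ∀ (m : ℕ →₀ M) (f : ℕ →₀ R), skewSMul σ δ m f = 0 →
    ∀ r : R, skewSMul σ δ m (skewMul σ δ (Finsupp.single 0 r) f) = 0

/-! The Armendariz property kills `(m_i x^i)(a_j x^j)`, whose coefficient of `x^(i+j)` is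
`m_i σ^i(a_j)`; applying `(C_σ)` `i` times then gives `m_i a_j = 0`. -/

section SkewCoefficients

variable {R : Type*} [Ring R] {σ δ : R → R}

theorem fw_apply_zero (hσ : σ 0 = 0) (hδ : δ 0 = 0) (i j : ℕ) : fw σ δ i j 0 = 0 := by
  induction j generalizing i with
  | zero => cases i <;> rfl
  | succ j ih =>
    cases i with
    | zero => simp only [fw, ih, hδ]
    | succ i => simp only [fw, ih, hσ, hδ, add_zero]

theorem fw_eq_zero_of_lt (hσ : σ 0 = 0) (hδ : δ 0 = 0) {i j : ℕ} (h : j < i) (a : R) :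
    fw σ δ i j a = 0 := by
  induction j generalizing i with
  | zero => obtain ⟨i, rfl⟩ := Nat.exists_eq_add_one_of_ne_zero (by omega : i ≠ 0); rfl
  | succ j ih =>
    obtain ⟨i, rfl⟩ := Nat.exists_eq_add_one_of_ne_zero (by omega : i ≠ 0)
    simp only [fw, ih (by omega : j < i), ih (by omega : j < i + 1), hσ, hδ, add_zero]

theorem fw_self (hσ : σ 0 = 0) (hδ : δ 0 = 0) (i : ℕ) (a : R) : fw σ δ i i a = σ^[i] a := by
  induction i with
  | zero => rfl
  | succ i ih =>
    simp only [fw, ih, fw_eq_zero_of_lt hσ hδ (Nat.lt_succ_self i), hδ, add_zero,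
      Function.iterate_succ_apply']

variable {M : Type*} [AddCommGroup M] [Module Rᵐᵒᵖ M]

theorem skewSMul_single_single (hσ : σ 0 = 0) (hδ : δ 0 = 0) (i j : ℕ) (m : M) (b : R) :
    skewSMul σ δ (Finsupp.single i m) (Finsupp.single j b) =
      ∑ k ∈ Finset.range (i + 1), Finsupp.single (k + j) (op (fw σ δ k i b) • m) := by
  unfold skewSMul
  rw [Finsupp.sum_single_index, Finsupp.sum_single_index]
  · simp [fw_apply_zero hσ hδ]
  · simp

theorem skewSMul_single_single_apply_add (hσ : σ 0 = 0) (hδ : δ 0 = 0) (i j : ℕ) (m : M)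
    (b : R) : skewSMul σ δ (Finsupp.single i m) (Finsupp.single j b) (i + j) =
      op (σ^[i] b) • m := by
  rw [skewSMul_single_single hσ hδ, Finsupp.finsetSum_apply,
    Finset.sum_eq_single_of_mem i (Finset.self_mem_range_succ i)]
  · rw [Finsupp.single_eq_same, fw_self hσ hδ]
  · intro k _ hki
    exact Finsupp.single_eq_of_ne (by omega)

end SkewCoefficients

theorem smul_eq_zero_of_iterate_smul_eq_zero {R M : Type*} [Ring R] [AddCommGroup M]
    [Module Rᵐᵒᵖ M] {σ : R → R} (hC : ∀ (m : M) (a : R), op (σ a) • m = 0 → op a • m = 0)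
    (n : ℕ) {m : M} {a : R} (h : op (σ^[n] a) • m = 0) : op a • m = 0 := by
  induction n generalizing a with
  | zero => exact h
  | succ n ih => exact hC m a (ih (by rwa [← Function.iterate_succ_apply]))

theorem armendariz_Csigma_coeffs_general {R : Type*} [Ring R] (σ : R →+* R) (δ : R → R)
    (hδadd : ∀ a b : R, δ (a + b) = δ a + δ b)
    (M : Type*) [AddCommGroup M] [Module Rᵐᵒᵖ M]
    (hArm : IsSkewArmendariz ⇑σ δ M)
    (hC : ∀ (m : M) (a : R), op (σ a) • m = 0 → op a • m = 0) :
    ∀ (m : ℕ →₀ M) (f : ℕ →₀ R), skewSMul ⇑σ δ m f = 0 →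
      ∀ i j : ℕ, op (f j) • m i = 0 := by
  intro m f hmf i j
  have hδ : δ 0 = 0 := by simpa using hδadd 0 0
  have hlead := skewSMul_single_single_apply_add (map_zero σ) hδ i j (m i) (f j)
  rw [hArm m f hmf i j, Finsupp.zero_apply] at hlead
  exact smul_eq_zero_of_iterate_smul_eq_zero hC i hlead.symm

/-- If `M_R` is `(σ,δ)`-skew Armendariz and satisfies condition `(C_σ)`
(`m σ(a) = 0 ⟹ m a = 0`), then `m(x) f(x) = 0` implies `m_i a_j = 0` for all `i, j`. -/
theorem armendariz_Csigma_coeffs {R : Type*} [Ring R] (σ : R →+* R) (δ : R → R)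
    (hδadd : ∀ a b : R, δ (a + b) = δ a + δ b)
    (hδmul : ∀ a b : R, δ (a * b) = σ a * δ b + δ a * b)
    (M : Type*) [AddCommGroup M] [Module Rᵐᵒᵖ M]
    (hArm : IsSkewArmendariz ⇑σ δ M)
    (hC : ∀ (m : M) (a : R), op (σ a) • m = 0 → op a • m = 0) :
    ∀ (m : ℕ →₀ M) (f : ℕ →₀ R), skewSMul ⇑σ δ m f = 0 →
      ∀ i j : ℕ, op (f j) • m i = 0 :=
  armendariz_Csigma_coeffs_general σ δ hδadd M hArm hC
end

section
/- Every (σ,δ)-compatible reduced module is (σ,δ)-skew Armendariz. -/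
open MulOpposite

/-!
Compatibility lets `m a = 0` pass to `m f_i^j(a) = 0`, and gives `m f_t^t(a) = 0 ↔ m a = 0`;
reducedness gives `m c = 0 → m a c = 0` and `m c² = 0 → m c = 0`. The products `m_j g_l` are
killed from the top degree down: in degree `n`, once `m_j g_l = 0` for all `j + l > n`, the
coefficient of `x^n` in `m(x) g(x)` collapses to `Σ_{j+l=n} m_j f_j^j(g_l)`, and for
`t = 0, 1, …` in turn, multiplying it on the right by `c = f_t^t(g_{n-t})` kills every term
except `m_t c²`.
-/

section Compatible

variable {R : Type*} [Ring R] {σ δ : R → R} {M : Type*} [AddCommGroup M] [Module Rᵐᵒᵖ M]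

theorem smul_fw_eq_zero (hσ : SigmaCompatible σ M) (hδ : DeltaCompatible δ M) {mm : M} {a : R}
    (h : op a • mm = 0) (i j : ℕ) : op (fw σ δ i j a) • mm = 0 := by
  induction j generalizing i with
  | zero =>
    cases i with
    | zero => exact h
    | succ i => simp [fw]
  | succ j ih =>
    cases i with
    | zero => exact hδ mm _ (ih 0)
    | succ i => rw [fw, op_add, add_smul, (hσ mm _).mp (ih i), hδ mm _ (ih (i + 1)), add_zero]

theorem smul_fw_of_lt (hσ : SigmaCompatible σ M) (hδ : DeltaCompatible δ M) (mm : M) (a : R) :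
    ∀ {i j}, j < i → op (fw σ δ i j a) • mm = 0
  | i + 1, 0, _ => by simp [fw]
  | i + 1, j + 1, hji => by
    rw [fw, op_add, add_smul, (hσ mm _).mp (smul_fw_of_lt hσ hδ mm a (show j < i by omega)),
      hδ mm _ (smul_fw_of_lt hσ hδ mm a (show j < i + 1 by omega)), add_zero]

theorem smul_fw_self_eq_zero_iff (hσ : SigmaCompatible σ M) (hδ : DeltaCompatible δ M)
    (mm : M) (a : R) (t : ℕ) : op (fw σ δ t t a) • mm = 0 ↔ op a • mm = 0 := by
  induction t with
  | zero => rfl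
  | succ t ih =>
    rw [← ih, fw, op_add, add_smul, hδ mm _ (smul_fw_of_lt hσ hδ mm a (Nat.lt_succ_self t)),
      add_zero]
    exact (hσ mm _).symm

theorem skewSMul_single_single_eq_zero (hσ : SigmaCompatible σ M) (hδ : DeltaCompatible δ M)
    {mm : M} {b : R} (h : op b • mm = 0) (j l : ℕ) :
    skewSMul σ δ (Finsupp.single j mm) (Finsupp.single l b) = 0 := by
  have hzero : ∀ i, op (fw σ δ i j 0) • mm = 0 :=
    fun i => smul_fw_eq_zero hσ hδ (by rw [op_zero, zero_smul]) i j
  rw [skewSMul, Finsupp.sum_single_index (by simp [Finsupp.sum]),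
    Finsupp.sum_single_index (by simp [hzero])]
  exact Finset.sum_eq_zero fun i _ => by rw [smul_fw_eq_zero hσ hδ h, Finsupp.single_zero]

end Compatible

namespace IsReducedModule

variable {R : Type*} [Ring R] {M : Type*} [AddCommGroup M] [Module Rᵐᵒᵖ M]

theorem smul_mul_eq_zero (hred : IsReducedModule (R := R) M) {mm : M} {a : R}
    (h : op a • mm = 0) (r : R) : op (r * a) • mm = 0 :=
  hred mm a h _ ⟨r * a, rfl⟩ ⟨op r • mm, by rw [smul_smul, ← op_mul]⟩

theorem smul_eq_zero_of_smul_mul_self (hred : IsReducedModule (R := R) M) {mm : M} {a : R}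
    (h : op (a * a) • mm = 0) : op a • mm = 0 :=
  hred (op a • mm) a (by rwa [smul_smul, ← op_mul]) _ ⟨1, by simp⟩ ⟨mm, rfl⟩

end IsReducedModule

section Armendariz

variable {R : Type*} [Ring R] {σ δ : R → R} {M : Type*} [AddCommGroup M] [Module Rᵐᵒᵖ M]

theorem skewSMul_apply (m : ℕ →₀ M) (g : ℕ →₀ R) (n : ℕ) :
    skewSMul σ δ m g n = ∑ p ∈ m.support ×ˢ g.support, ∑ i ∈ Finset.range (p.1 + 1),
      if i + p.2 = n then op (fw σ δ i p.1 (g p.2)) • m p.1 else 0 := by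
  rw [Finset.sum_product]
  simp [skewSMul, Finsupp.sum, Finsupp.finsetSum_apply, Finsupp.single_apply]

theorem skewSMul_apply_eq_sum_diag (hσ : SigmaCompatible σ M) (hδ : DeltaCompatible δ M)
    (m : ℕ →₀ M) (g : ℕ →₀ R) (n : ℕ) (H : ∀ j l, n < j + l → op (g l) • m j = 0) :
    skewSMul σ δ m g n = ∑ p ∈ m.support ×ˢ g.support,
      if p.1 + p.2 = n then op (fw σ δ p.1 p.1 (g p.2)) • m p.1 else 0 := by
  rw [skewSMul_apply]
  refine Finset.sum_congr rfl fun p _ => ?_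
  rw [Finset.sum_range_succ, Finset.sum_eq_zero, zero_add]
  intro i hi
  rw [Finset.mem_range] at hi
  split_ifs with hin
  · exact smul_fw_eq_zero hσ hδ (H _ _ (by omega)) _ _
  · rfl

theorem smul_eq_zero_of_skewSMul_eq_zero_of_add_eq (hred : IsReducedModule (R := R) M)
    (hσ : SigmaCompatible σ M) (hδ : DeltaCompatible δ M) {m : ℕ →₀ M} {g : ℕ →₀ R}
    (hmg : skewSMul σ δ m g = 0) {n : ℕ} (H : ∀ j l, n < j + l → op (g l) • m j = 0) :
    ∀ j l, j + l = n → op (g l) • m j = 0 := by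
  have hdiag := skewSMul_apply_eq_sum_diag hσ hδ m g n H
  rw [hmg, Finsupp.coe_zero, Pi.zero_apply, eq_comm] at hdiag
  intro t
  induction t using Nat.strong_induction_on with
  | _ t ih =>
    intro u htu
    by_cases hmem : (t, u) ∈ m.support ×ˢ g.support
    swap
    · rcases not_and_or.mp (Finset.mem_product.not.mp hmem) with ht | hu
      · rw [Finsupp.notMem_support_iff.mp ht, smul_zero]
      · rw [Finsupp.notMem_support_iff.mp hu, op_zero, zero_smul]
    set c := fw σ δ t t (g u)
    rw [← smul_fw_self_eq_zero_iff hσ hδ _ _ t]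
    apply hred.smul_eq_zero_of_smul_mul_self
    have hcdiag := congrArg (op c • ·) hdiag
    simp only [Finset.smul_sum, smul_zero] at hcdiag
    rw [Finset.sum_eq_single_of_mem _ hmem ?_, if_pos htu, smul_smul, ← op_mul] at hcdiag
    · exact hcdiag
    rintro ⟨j, l⟩ - hne
    dsimp only
    split_ifs with hjl
    · rcases lt_trichotomy j t with hjt | rfl | hjt
      · rw [smul_fw_eq_zero hσ hδ (ih j hjt l hjl) j j, smul_zero]
      · exact (hne (by rw [show l = u by omega])).elim
      · have hc : op c • m j = 0 := smul_fw_eq_zero hσ hδ (H j u (by omega)) t t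
        rw [smul_smul, ← op_mul]
        exact hred.smul_mul_eq_zero hc _
    · exact smul_zero _

theorem smul_eq_zero_of_skewSMul_eq_zero (hred : IsReducedModule (R := R) M)
    (hσ : SigmaCompatible σ M) (hδ : DeltaCompatible δ M) {m : ℕ →₀ M} {g : ℕ →₀ R}
    (hmg : skewSMul σ δ m g = 0) (j l : ℕ) : op (g l) • m j = 0 := by
  set N := m.support.sup id + g.support.sup id
  have htop : ∀ j l, N < j + l → op (g l) • m j = 0 := by
    intro j l hjl
    by_cases hj : m j = 0
    · rw [hj, smul_zero]
    by_cases hl : g l = 0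
    · rw [hl, op_zero, zero_smul]
    have := Finset.le_sup (f := id) (Finsupp.mem_support_iff.mpr hj)
    have := Finset.le_sup (f := id) (Finsupp.mem_support_iff.mpr hl)
    simp only [id] at *
    omega
  induction h : N - (j + l) using Nat.strong_induction_on generalizing j l with
  | _ k ih =>
    refine smul_eq_zero_of_skewSMul_eq_zero_of_add_eq hred hσ hδ hmg (fun j' l' hlt => ?_) j l rfl
    by_cases hN : N < j' + l'
    · exact htop j' l' hN
    · exact ih _ (by omega) j' l' rfl

end Armendariz

theorem compatible_reduced_isSkewArmendariz_general {R : Type*} [Ring R] (σ : R →+* R) (δ : R → R)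
    (M : Type*) [AddCommGroup M] [Module Rᵐᵒᵖ M]
    (hred : IsReducedModule (R := R) M)
    (hσ : SigmaCompatible ⇑σ M) (hδc : DeltaCompatible δ M) :
    IsSkewArmendariz ⇑σ δ M := fun _ _ hmg i j =>
  skewSMul_single_single_eq_zero hσ hδc (smul_eq_zero_of_skewSMul_eq_zero hred hσ hδc hmg i j) i j

/-- Every `(σ,δ)`-compatible and reduced module is `(σ,δ)`-skew Armendariz. -/
theorem compatible_reduced_isSkewArmendariz {R : Type*} [Ring R] (σ : R →+* R) (δ : R → R)
    (hδadd : ∀ a b : R, δ (a + b) = δ a + δ b)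
    (hδmul : ∀ a b : R, δ (a * b) = σ a * δ b + δ a * b)
    (M : Type*) [AddCommGroup M] [Module Rᵐᵒᵖ M]
    (hred : IsReducedModule (R := R) M)
    (hσ : SigmaCompatible ⇑σ M) (hδc : DeltaCompatible δ M) :
    IsSkewArmendariz ⇑σ δ M :=
  compatible_reduced_isSkewArmendariz_general σ δ M hred hσ hδc
end
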